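/- arXiv:1102.2924 — 4 statements merged into one kernel-verified Lean document; each statement's English description precedes it below -/
import Mathlib

section
/- Let A → Ā be a homomorphism of commutative rings, let B be a commutative A-algebra, let B̄ = Ā ⊗_A B, and let J be a B̄-module. Assume Tor_1^A(B, Ā) = 0. Then for every square-zero extension of A-algebras 0 → J → B' → B → 0 (where the kernel, as a B-module, carries the B-module structure obtained from the B̄-module structure of J via B → B̄), there exists a square-zero extension of Ā-algebras 0 → J → B̄' → B̄ → 0 and an A-algebra homomorphism B' → B̄' that restricts to the identity on J and induces the canonical map B → B̄ on quotients. -/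
/-!
STATEMENT 1: If `Tor_1^A(B, Ā) = 0`, every square-zero `A`-algebra extension of `B` by `J`
(where `J` is a `B̄ = Ā ⊗[A] B`-module, viewed as a `B`-module via `B → B̄`) maps to a
square-zero `Ā`-algebra extension of `B̄` by `J`, compatibly with the canonical maps.
-/

open scoped TensorProduct
open CategoryTheory Limits

attribute [local instance] Algebra.TensorProduct.rightAlgebra

/-- A square-zero extension of the `R`-algebra `B` by the `B`-module `J`:
a surjective `R`-algebra homomorphism `proj : E → B` together with an additive inclusion
`incl : J → E` identifying `J` with the kernel of `proj`, such that
`e * incl j = incl (proj e • j)`; the latter condition encodes both that the kernel has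
square zero and that the induced `B`-module structure on the kernel is that of `J`. -/
structure SqZeroExt (R B J : Type) [CommRing R] [CommRing B] [Algebra R B]
    [AddCommGroup J] [Module B J] where
  E : Type
  [commRing : CommRing E]
  [algebra : Algebra R E]
  proj : E →ₐ[R] B
  proj_surjective : Function.Surjective proj
  incl : J →+ E
  incl_injective : Function.Injective incl
  range_eq_ker : ∀ x : E, proj x = 0 ↔ ∃ j : J, incl j = x
  mul_incl : ∀ (e : E) (j : J), e * incl j = incl (proj e • j)

attribute [instance] SqZeroExt.commRing SqZeroExt.algebra

/-!
Base change along `A → Ā` is right exact, so `Ā ⊗_A B' → B̄` is surjective with kernel the image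
of `Ā ⊗_A J`; a diagram chase through a projective resolution of `Ā` shows that
`Tor_1^A(B, Ā) = 0` makes `Ā ⊗_A J → Ā ⊗_A B'` injective. The extension `B̄'` is then the pushout
of `Ā ⊗_A B'` along the multiplication map `Ā ⊗_A J → J`; as that map is surjective, the pushout
is simply the quotient of `Ā ⊗_A B'` by the image of its kernel.
-/

open Function

theorem LinearMap.rTensor_lTensor_apply {R M M' Q Q' : Type*} [CommSemiring R]
    [AddCommMonoid M] [AddCommMonoid M'] [AddCommMonoid Q] [AddCommMonoid Q']
    [Module R M] [Module R M'] [Module R Q] [Module R Q']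
    (f : M →ₗ[R] M') (g : Q →ₗ[R] Q') (x : M ⊗[R] Q) :
    f.rTensor Q' (g.lTensor M x) = g.lTensor M' (f.rTensor Q x) := by
  rw [← LinearMap.comp_apply, LinearMap.rTensor_comp_lTensor, ← LinearMap.lTensor_comp_rTensor,
    LinearMap.comp_apply]

section TensorChase

variable {A : Type*} [CommRing A] {J E B N P₀ P₁ P₂ : Type*}
  [AddCommGroup J] [AddCommGroup E] [AddCommGroup B] [AddCommGroup N]
  [AddCommGroup P₀] [AddCommGroup P₁] [AddCommGroup P₂]
  [Module A J] [Module A E] [Module A B] [Module A N]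
  [Module A P₀] [Module A P₁] [Module A P₂]
  {ι : J →ₗ[A] E} {p : E →ₗ[A] B} {d₂ : P₂ →ₗ[A] P₁} {d₁ : P₁ →ₗ[A] P₀}

theorem mem_range_rTensor_of_lTensor_eq [Module.Flat A P₀] (hι : Injective ι)
    (hιp : Exact ι p) (hp : Surjective p) (hd : d₁ ∘ₗ d₂ = 0)
    (hB : Exact (d₂.rTensor B) (d₁.rTensor B)) {y : P₀ ⊗[A] J} {z : P₁ ⊗[A] E}
    (hyz : ι.lTensor P₀ y = d₁.rTensor E z) : y ∈ LinearMap.range (d₁.rTensor J) := by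
  have hpz : d₁.rTensor B (p.lTensor P₁ z) = 0 := by
    rw [LinearMap.rTensor_lTensor_apply, ← hyz, ← LinearMap.comp_apply, ← LinearMap.lTensor_comp,
      hιp.linearMap_comp_eq_zero, LinearMap.lTensor_zero, LinearMap.zero_apply]
  obtain ⟨w, hw⟩ := (hB _).mp hpz
  obtain ⟨v, rfl⟩ := p.lTensor_surjective P₂ hp w
  have hpz' : p.lTensor P₁ (z - d₂.rTensor E v) = 0 := by
    rw [map_sub, ← LinearMap.rTensor_lTensor_apply, hw, sub_self]
  obtain ⟨u, hu⟩ := (lTensor_exact P₁ hιp hp _).mp hpz'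
  refine ⟨u, Module.Flat.lTensor_preserves_injective_linearMap ι hι ?_⟩
  rw [← LinearMap.rTensor_lTensor_apply, hu, map_sub, ← LinearMap.comp_apply,
    ← LinearMap.rTensor_comp, hd, LinearMap.rTensor_zero, LinearMap.zero_apply, sub_zero, hyz]

theorem lTensor_injective_of_exact_rTensor [Module.Flat A P₀] {ρ : P₀ →ₗ[A] N}
    (hρ : Surjective ρ) (hdρ : Exact d₁ ρ) (hd : d₁ ∘ₗ d₂ = 0)
    (hB : Exact (d₂.rTensor B) (d₁.rTensor B)) (hι : Injective ι) (hιp : Exact ι p)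
    (hp : Surjective p) : Injective (ι.lTensor N) := by
  refine (injective_iff_map_eq_zero _).mpr fun x hx => ?_
  obtain ⟨y, rfl⟩ := ρ.rTensor_surjective J hρ x
  rw [← LinearMap.rTensor_lTensor_apply] at hx
  obtain ⟨z, hz⟩ := (rTensor_exact E hdρ hρ _).mp hx
  obtain ⟨u, rfl⟩ := mem_range_rTensor_of_lTensor_eq hι hιp hp hd hB hz.symm
  rw [← LinearMap.comp_apply, ← LinearMap.rTensor_comp, hdρ.linearMap_comp_eq_zero,
    LinearMap.rTensor_zero, LinearMap.zero_apply]

end TensorChase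

namespace CategoryTheory.ProjectiveResolution

variable {A : Type} [CommRing A]

theorem exact_d_one_zero_π_f_zero {N : ModuleCat.{0} A}
    (P : ProjectiveResolution N) : Exact (P.complex.d 1 0).hom (P.π.f 0).hom :=
  (ShortComplex.ShortExact.moduleCat_exact_iff_function_exact _).mp
    (ShortComplex.exact_of_g_is_cokernel
      (ShortComplex.mk _ _ P.complex_d_comp_π_f_zero) P.isColimitCokernelCofork)

theorem exact_rTensor_of_isZero_tor_one (M : Type) [AddCommGroup M] [Module A M]
    {N : ModuleCat.{0} A} (P : ProjectiveResolution N)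
    (htor : IsZero (((Tor (ModuleCat A) 1).obj (ModuleCat.of A M)).obj N)) :
    Exact ((P.complex.d 2 1).hom.rTensor M) ((P.complex.d 1 0).hom.rTensor M) := by
  let F := (MonoidalCategory.tensoringLeft (ModuleCat A)).obj (ModuleCat.of A M)
  have hexact : ((F.mapHomologicalComplex (ComplexShape.down ℕ)).obj P.complex).ExactAt 1 :=
    (HomologicalComplex.exactAt_iff_isZero_homology _ _).mpr
      (htor.of_iso (P.isoLeftDerivedObj F 1).symm)
  rw [HomologicalComplex.exactAt_iff' _ 2 1 0 (by simp) (by simp),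
    ShortComplex.ShortExact.moduleCat_exact_iff_function_exact] at hexact
  rwa [LinearMap.rTensor_exact_iff_lTensor_exact]

end CategoryTheory.ProjectiveResolution

theorem lTensor_injective_of_isZero_tor_one {A J E B N : Type} [CommRing A]
    [AddCommGroup J] [AddCommGroup E] [AddCommGroup B] [AddCommGroup N]
    [Module A J] [Module A E] [Module A B] [Module A N] {ι : J →ₗ[A] E} {p : E →ₗ[A] B}
    (htor : IsZero (((Tor (ModuleCat A) 1).obj (ModuleCat.of A B)).obj (ModuleCat.of A N)))
    (hι : Injective ι) (hιp : Exact ι p) (hp : Surjective p) : Injective (ι.lTensor N) := by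
  let P : ProjectiveResolution (ModuleCat.of A N) := HasProjectiveResolution.out.some
  let e := HomologicalComplex.singleObjXSelf (ComplexShape.down ℕ) 0 (ModuleCat.of A N)
  have : Module.Projective A (P.complex.X 0) := (IsProjective.iff_projective _).mpr (P.projective 0)
  exact lTensor_injective_of_exact_rTensor (ρ := e.hom.hom ∘ₗ (P.π.f 0).hom)
    (e.toLinearEquiv.surjective.comp ((ModuleCat.epi_iff_surjective _).mp inferInstance))
    (P.exact_d_one_zero_π_f_zero.comp_injective _ e.toLinearEquiv.injective (map_zero _))
    (congrArg ModuleCat.Hom.hom (P.complex.d_comp_d 2 1 0))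
    (P.exact_rTensor_of_isZero_tor_one B htor) hι hιp hp

section BaseChangeSMul

variable (A Abar B J : Type) [CommRing A] [CommRing Abar] [CommRing B] [Algebra A Abar]
  [Algebra A B] [AddCommGroup J] [Module B J] [Module A J] [IsScalarTower A B J]
  [Module (Abar ⊗[A] B) J] [IsScalarTower B (Abar ⊗[A] B) J]

instance : IsScalarTower A (Abar ⊗[A] B) J := .to₁₃₄ A B _ J

def baseChangeSMul : Abar ⊗[A] J →ₗ[A] J :=
  TensorProduct.lift ((Algebra.lsmul A A J).toLinearMap ∘ₗ
    (Algebra.TensorProduct.includeLeft : Abar →ₐ[A] Abar ⊗[A] B).toLinearMap)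

variable {A Abar B J}

@[simp]
theorem baseChangeSMul_tmul (a : Abar) (j : J) :
    baseChangeSMul A Abar B J (a ⊗ₜ j) = (a ⊗ₜ[A] (1 : B)) • j :=
  rfl

theorem baseChangeSMul_surjective : Surjective (baseChangeSMul A Abar B J) :=
  fun j => ⟨1 ⊗ₜ j, by rw [baseChangeSMul_tmul, ← Algebra.TensorProduct.one_def, one_smul]⟩

end BaseChangeSMul

namespace SqZeroExt

section OfKer

variable {R E B J : Type} [CommRing R] [CommRing E] [CommRing B] [Algebra R E] [Algebra R B]
  [AddCommGroup J] [Module B J] {π : E →ₐ[R] B} {φ : RingHom.ker π →+ J}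

def ofKerIdeal (hφ : ∀ (x : E) (k : RingHom.ker π), φ (x • k) = π x • φ k) : Ideal E where
  carrier := {x | ∃ k : RingHom.ker π, φ k = 0 ∧ (k : E) = x}
  add_mem' := by
    rintro _ _ ⟨k, hk, rfl⟩ ⟨k', hk', rfl⟩
    exact ⟨k + k', by rw [map_add, hk, hk', add_zero], rfl⟩
  zero_mem' := ⟨0, map_zero φ, rfl⟩
  smul_mem' := by
    rintro x _ ⟨k, hk, rfl⟩
    exact ⟨x • k, by rw [hφ, hk, smul_zero], rfl⟩

variable (hφ : ∀ (x : E) (k : RingHom.ker π), φ (x • k) = π x • φ k)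

theorem map_eq_zero_of_mem_ofKerIdeal : ∀ x ∈ ofKerIdeal hφ, π x = 0 := by
  rintro _ ⟨k, -, rfl⟩
  exact k.2

theorem mk_eq_mk_of_map_eq {k k' : RingHom.ker π} (h : φ k = φ k') :
    Ideal.Quotient.mk (ofKerIdeal hφ) k = Ideal.Quotient.mk (ofKerIdeal hφ) k' :=
  Ideal.Quotient.eq.mpr ⟨k - k', by rw [map_sub, h, sub_self], rfl⟩

noncomputable def ofKerIncl (hφs : Surjective φ) : J →+ E ⧸ ofKerIdeal hφ where
  toFun j := Ideal.Quotient.mk _ (surjInv hφs j : RingHom.ker π)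
  map_zero' := by
    rw [mk_eq_mk_of_map_eq hφ (k' := 0) (by rw [surjInv_eq hφs, map_zero])]
    exact map_zero _
  map_add' j j' := by
    rw [mk_eq_mk_of_map_eq hφ (k' := surjInv hφs j + surjInv hφs j')
      (by rw [map_add, surjInv_eq hφs, surjInv_eq hφs, surjInv_eq hφs])]
    exact map_add _ _ _

theorem ofKerIncl_map (hφs : Surjective φ) (k : RingHom.ker π) :
    ofKerIncl hφ hφs (φ k) = Ideal.Quotient.mk (ofKerIdeal hφ) k :=
  mk_eq_mk_of_map_eq hφ (surjInv_eq hφs _)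

theorem ofKerIncl_injective (hφs : Surjective φ) : Injective (ofKerIncl hφ hφs) := by
  refine (injective_iff_map_eq_zero _).mpr fun j hj => ?_
  obtain ⟨k, rfl⟩ := hφs j
  rw [ofKerIncl_map, Ideal.Quotient.eq_zero_iff_mem] at hj
  obtain ⟨k', hk', hkk'⟩ := hj
  rwa [← Subtype.ext hkk']

/-- The pushout of the extension `ker π → E → B` along `φ`. -/
noncomputable def ofKer (hπ : Surjective π) (hφs : Surjective φ) : SqZeroExt R B J where
  E := E ⧸ ofKerIdeal hφ
  proj := Ideal.Quotient.liftₐ _ π (map_eq_zero_of_mem_ofKerIdeal hφ)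
  proj_surjective := Surjective.of_comp (g := Ideal.Quotient.mk _) hπ
  incl := ofKerIncl hφ hφs
  incl_injective := ofKerIncl_injective hφ hφs
  range_eq_ker := by
    refine Ideal.Quotient.mk_surjective.forall.mpr fun x => ⟨fun hx => ?_, ?_⟩
    · exact ⟨φ ⟨x, hx⟩, ofKerIncl_map hφ hφs ⟨x, hx⟩⟩
    · rintro ⟨j, hj⟩
      obtain ⟨k, rfl⟩ := hφs j
      rw [← hj, ofKerIncl_map]
      exact k.2
  mul_incl := by
    refine Ideal.Quotient.mk_surjective.forall.mpr fun x j => ?_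
    obtain ⟨k, rfl⟩ := hφs j
    change _ = ofKerIncl hφ hφs (π x • φ k)
    rw [ofKerIncl_map, ← map_mul, ← hφ, ofKerIncl_map]
    rfl

noncomputable def ofKerMk (hπ : Surjective π) (hφs : Surjective φ) :
    E →ₐ[R] (ofKer hφ hπ hφs).E :=
  Ideal.Quotient.mkₐ R _

theorem ofKerMk_coe (hπ : Surjective π) (hφs : Surjective φ) (k : RingHom.ker π) :
    ofKerMk hφ hπ hφs k = (ofKer hφ hπ hφs).incl (φ k) :=
  (ofKerIncl_map hφ hφs k).symm

end OfKer

section BaseChange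

variable {A Abar B J : Type} [CommRing A] [CommRing Abar] [CommRing B] [Algebra A Abar]
  [Algebra A B] [AddCommGroup J] [Module B J] (ext : SqZeroExt A B J)

variable (Abar) in
def baseChangeProj : Abar ⊗[A] ext.E →ₐ[Abar] Abar ⊗[A] B :=
  Algebra.TensorProduct.map (AlgHom.id Abar Abar) ext.proj

variable (Abar) in
theorem coe_baseChangeProj :
    ⇑(ext.baseChangeProj Abar) = ext.proj.toLinearMap.lTensor Abar :=
  rfl

variable (Abar) in
theorem baseChangeProj_surjective : Surjective (ext.baseChangeProj Abar) := by
  rw [coe_baseChangeProj]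
  exact LinearMap.lTensor_surjective Abar ext.proj_surjective

variable [Module A J] [IsScalarTower A B J]

def inclₗ : J →ₗ[A] ext.E where
  toFun := ext.incl
  map_add' := map_add ext.incl
  map_smul' a j := by
    rw [RingHom.id_apply, Algebra.smul_def, ext.mul_incl, AlgHom.commutes, algebraMap_smul]

theorem exact_inclₗ_proj : Exact ext.inclₗ ext.proj.toLinearMap :=
  fun x => ext.range_eq_ker x

variable (Abar)

theorem exact_lTensor_inclₗ_baseChangeProj :
    Exact (ext.inclₗ.lTensor Abar) (ext.baseChangeProj Abar) := by
  rw [coe_baseChangeProj]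
  exact lTensor_exact Abar ext.exact_inclₗ_proj ext.proj_surjective

noncomputable def baseChangeKerEquiv (hinj : Injective (ext.inclₗ.lTensor Abar)) :
    Abar ⊗[A] J ≃+ RingHom.ker (ext.baseChangeProj Abar) :=
  AddEquiv.ofBijective (F := Abar ⊗[A] J →+ RingHom.ker (ext.baseChangeProj Abar))
    { toFun t := ⟨ext.inclₗ.lTensor Abar t,
        (ext.exact_lTensor_inclₗ_baseChangeProj Abar).apply_apply_eq_zero t⟩
      map_zero' := Subtype.ext (map_zero _)
      map_add' _ _ := Subtype.ext (map_add _ _ _) }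
    ⟨fun _ _ h => hinj (congrArg Subtype.val h),
      fun k => ((ext.exact_lTensor_inclₗ_baseChangeProj Abar k).mp k.2).imp
        fun _ h => Subtype.ext h⟩

@[simp]
theorem coe_baseChangeKerEquiv (hinj : Injective (ext.inclₗ.lTensor Abar)) (t : Abar ⊗[A] J) :
    (ext.baseChangeKerEquiv Abar hinj t : Abar ⊗[A] ext.E) = ext.inclₗ.lTensor Abar t :=
  rfl

variable [Module (Abar ⊗[A] B) J] [IsScalarTower B (Abar ⊗[A] B) J]

noncomputable def baseChangeKerHom (hinj : Injective (ext.inclₗ.lTensor Abar)) :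
    RingHom.ker (ext.baseChangeProj Abar) →+ J :=
  (baseChangeSMul A Abar B J).toAddMonoidHom.comp
    (ext.baseChangeKerEquiv Abar hinj).symm.toAddMonoidHom

theorem baseChangeKerHom_baseChangeKerEquiv (hinj : Injective (ext.inclₗ.lTensor Abar))
    (t : Abar ⊗[A] J) :
    ext.baseChangeKerHom Abar hinj (ext.baseChangeKerEquiv Abar hinj t) =
      baseChangeSMul A Abar B J t := by
  simp [baseChangeKerHom]

theorem baseChangeKerHom_smul (hinj : Injective (ext.inclₗ.lTensor Abar))
    (x : Abar ⊗[A] ext.E) (k : RingHom.ker (ext.baseChangeProj Abar)) :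
    ext.baseChangeKerHom Abar hinj (x • k) =
      ext.baseChangeProj Abar x • ext.baseChangeKerHom Abar hinj k := by
  obtain ⟨t, rfl⟩ := (ext.baseChangeKerEquiv Abar hinj).surjective k
  induction x using TensorProduct.induction_on with
  | zero => simp
  | add x y hx hy => simp only [add_smul, map_add, hx, hy]
  | tmul a y =>
    induction t using TensorProduct.induction_on with
    | zero => simp
    | add t s ht hs => simp only [map_add, smul_add, ht, hs]
    | tmul c j =>
      have : (a ⊗ₜ y) • ext.baseChangeKerEquiv Abar hinj (c ⊗ₜ j) =
          ext.baseChangeKerEquiv Abar hinj ((a * c) ⊗ₜ (ext.proj y • j)) :=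
        Subtype.ext (by
          rw [Submodule.coe_smul, smul_eq_mul, coe_baseChangeKerEquiv, coe_baseChangeKerEquiv,
            LinearMap.lTensor_tmul, LinearMap.lTensor_tmul, Algebra.TensorProduct.tmul_mul_tmul]
          exact congrArg _ (ext.mul_incl y j))
      rw [this, baseChangeKerHom_baseChangeKerEquiv, baseChangeKerHom_baseChangeKerEquiv,
        baseChangeSMul_tmul, baseChangeSMul_tmul, baseChangeProj, Algebra.TensorProduct.map_tmul,
        AlgHom.id_apply, ← algebraMap_smul (Abar ⊗[A] B) (ext.proj y), smul_smul, smul_smul]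
      congr 1
      simp [Algebra.TensorProduct.right_algebraMap_apply, Algebra.TensorProduct.tmul_mul_tmul,
        mul_comm]

theorem baseChangeKerHom_surjective (hinj : Injective (ext.inclₗ.lTensor Abar)) :
    Surjective (ext.baseChangeKerHom Abar hinj) :=
  baseChangeSMul_surjective.comp (ext.baseChangeKerEquiv Abar hinj).symm.surjective

noncomputable def baseChange (hinj : Injective (ext.inclₗ.lTensor Abar)) :
    SqZeroExt Abar (Abar ⊗[A] B) J :=
  ofKer (ext.baseChangeKerHom_smul Abar hinj) (ext.baseChangeProj_surjective Abar)
    (ext.baseChangeKerHom_surjective Abar hinj)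

noncomputable def baseChangeHom (hinj : Injective (ext.inclₗ.lTensor Abar)) :
    ext.E →+* (ext.baseChange Abar hinj).E :=
  (ofKerMk _ _ _).toRingHom.comp Algebra.TensorProduct.includeRight.toRingHom

theorem baseChangeHom_algebraMap (hinj : Injective (ext.inclₗ.lTensor Abar)) (a : A) :
    ext.baseChangeHom Abar hinj (algebraMap A ext.E a) =
      algebraMap Abar (ext.baseChange Abar hinj).E (algebraMap A Abar a) := by
  change ofKerMk _ _ _ (Algebra.TensorProduct.includeRight (algebraMap A ext.E a)) = _
  rw [AlgHom.commutes, IsScalarTower.algebraMap_apply A Abar, AlgHom.commutes]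
  rfl

theorem proj_baseChangeHom (hinj : Injective (ext.inclₗ.lTensor Abar)) (x : ext.E) :
    (ext.baseChange Abar hinj).proj (ext.baseChangeHom Abar hinj x) =
      algebraMap B (Abar ⊗[A] B) (ext.proj x) :=
  rfl

theorem baseChangeHom_incl (hinj : Injective (ext.inclₗ.lTensor Abar)) (j : J) :
    ext.baseChangeHom Abar hinj (ext.incl j) = (ext.baseChange Abar hinj).incl j := by
  change ofKerMk _ _ _ (ext.baseChangeKerEquiv Abar hinj (1 ⊗ₜ j) : Abar ⊗[A] ext.E) = _
  rw [ofKerMk_coe, baseChangeKerHom_baseChangeKerEquiv, baseChangeSMul_tmul,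
    ← Algebra.TensorProduct.one_def, one_smul]
  rfl

end BaseChange

end SqZeroExt

theorem sqZeroExt_baseChange_exists
    (A Abar B : Type) [CommRing A] [CommRing Abar] [CommRing B]
    [Algebra A Abar] [Algebra A B]
    (J : Type) [AddCommGroup J]
    [Module B J] [Module (Abar ⊗[A] B) J]
    [IsScalarTower B (Abar ⊗[A] B) J]
    (htor : IsZero (((Tor (ModuleCat A) 1).obj (ModuleCat.of A B)).obj (ModuleCat.of A Abar)))
    (ext : SqZeroExt A B J) :
    ∃ (extBar : SqZeroExt Abar (Abar ⊗[A] B) J) (g : ext.E →+* extBar.E),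
      (∀ a : A, g (algebraMap A ext.E a) =
        algebraMap Abar extBar.E (algebraMap A Abar a)) ∧
      (∀ x : ext.E, extBar.proj (g x) = algebraMap B (Abar ⊗[A] B) (ext.proj x)) ∧
      (∀ j : J, g (ext.incl j) = extBar.incl j) := by
  let _ : Module A J := Module.compHom J (algebraMap A B)
  have _ : IsScalarTower A B J := IsScalarTower.of_compHom A B J
  have hinj := lTensor_injective_of_isZero_tor_one htor ext.incl_injective ext.exact_inclₗ_proj
    ext.proj_surjective
  exact ⟨ext.baseChange Abar hinj, ext.baseChangeHom Abar hinj,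
    ext.baseChangeHom_algebraMap Abar hinj, ext.proj_baseChangeHom Abar hinj,
    ext.baseChangeHom_incl Abar hinj⟩
end

section
/- Let A be a commutative ring, Ā a commutative A-algebra, and let n ≥ 1 be an integer. Let f : C → B and f' : C' → B be surjective A-algebra homomorphisms such that Tor_q^A(C, Ā) = 0 and Tor_q^A(C', Ā) = 0 for all q with 0 < q ≤ n − 1, and Tor_q^A(B, Ā) = 0 for all q with 0 < q ≤ n. Then Tor_q^A(C ×_B C', Ā) = 0 for all q with 0 < q ≤ n − 1. -/
/-!
The vanishing is read off long exact `Tor`-sequences in the first variable. The Mayer–Vietoris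
sequence `0 → C ×_B C' → C × C' → B → 0`, `(c, c') ↦ f c - f' c'`, is exact on the right as `f`
is onto, so `Tor_q(C ×_B C')` sits between `Tor_{q+1}(B)` and `Tor_q(C × C')`, and the latter
vanishes by the split sequence `0 → C → C × C' → C' → 0`. The long exact sequences come from a
projective resolution `P` of `Ā`: as each `P_i` is flat, `- ⊗ P` turns a short exact sequence of
modules into a short exact sequence of complexes.
-/

open CategoryTheory Limits

/-- The fiber product `C ×_B C'` of `f : C → B`, `f' : C' → B`, as an `A`-subalgebra of
`C × C'`. -/
def fiberProduct (A B C C' : Type) [CommRing A] [CommRing B] [CommRing C] [CommRing C']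
    [Algebra A B] [Algebra A C] [Algebra A C']
    (f : C →ₐ[A] B) (f' : C' →ₐ[A] B) : Subalgebra A (C × C') :=
  AlgHom.equalizer (f.comp (AlgHom.fst A C C')) (f'.comp (AlgHom.snd A C C'))

open MonoidalCategory

namespace CategoryTheory

section

variable {C : Type*} [Category* C] [MonoidalCategory C] [Preadditive C] [MonoidalPreadditive C]
  {ι : Type*} {c : ComplexShape ι}

def tensorLeftComplex (K : HomologicalComplex C c) : C ⥤ HomologicalComplex C c where
  obj X := (((tensoringLeft C).obj X).mapHomologicalComplex c).obj K
  map f := (NatTrans.mapHomologicalComplex ((tensoringLeft C).map f) c).app K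

instance (K : HomologicalComplex C c) : (tensorLeftComplex K).Additive where
  map_add {_ _ f g} := by ext; exact MonoidalPreadditive.add_whiskerRight f g

end

noncomputable def ProjectiveResolution.torIsoHomology {C : Type*} [Category* C]
    [MonoidalCategory C] [Abelian C] [MonoidalPreadditive C] [HasProjectiveResolutions C]
    {Y : C} (P : ProjectiveResolution Y) (X : C) (q : ℕ) :
    ((Tor C q).obj X).obj Y ≅ ((tensorLeftComplex P.complex).obj X).homology q :=
  P.isoLeftDerivedObj ((tensoringLeft C).obj X) q

end CategoryTheory

universe u

namespace CategoryTheory.ShortComplex.ShortExact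

variable {A : Type u} [CommRing A] {S : ShortComplex (ModuleCat.{u} A)}

lemma map_tensorLeftComplex (hS : S.ShortExact) {M : ModuleCat.{u} A}
    (P : ProjectiveResolution M) : (S.map (tensorLeftComplex P.complex)).ShortExact := by
  refine (HomologicalComplex.shortExact_iff_degreewise_shortExact _).2 fun i => ?_
  rw [← ShortComplex.map_comp]
  -- in degree `i` this is `S.map (tensorRight (P.complex.X i))`, and projective modules are flat
  exact hS.map_of_exact (tensorRight (P.complex.X i))

lemma isZero_Tor_X₁ (hS : S.ShortExact) (M : ModuleCat.{u} A) (q : ℕ)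
    (h₃ : IsZero (((Tor _ (q + 1)).obj S.X₃).obj M))
    (h₂ : IsZero (((Tor _ q).obj S.X₂).obj M)) :
    IsZero (((Tor _ q).obj S.X₁).obj M) := by
  obtain ⟨P⟩ : Nonempty (ProjectiveResolution M) := HasProjectiveResolution.out
  refine IsZero.of_iso ?_ (P.torIsoHomology S.X₁ q)
  exact ((hS.map_tensorLeftComplex P).homology_exact₁ (q + 1) q rfl).isZero_X₂
    ((h₃.of_iso (P.torIsoHomology _ _).symm).eq_of_src _ _)
    ((h₂.of_iso (P.torIsoHomology _ _).symm).eq_of_tgt _ _)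

lemma isZero_Tor_X₂ (hS : S.ShortExact) (M : ModuleCat.{u} A) (q : ℕ)
    (h₁ : IsZero (((Tor _ q).obj S.X₁).obj M)) (h₃ : IsZero (((Tor _ q).obj S.X₃).obj M)) :
    IsZero (((Tor _ q).obj S.X₂).obj M) := by
  obtain ⟨P⟩ : Nonempty (ProjectiveResolution M) := HasProjectiveResolution.out
  refine IsZero.of_iso ?_ (P.torIsoHomology S.X₂ q)
  exact ((hS.map_tensorLeftComplex P).homology_exact₂ q).isZero_X₂
    ((h₁.of_iso (P.torIsoHomology _ _).symm).eq_of_src _ _)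
    ((h₃.of_iso (P.torIsoHomology _ _).symm).eq_of_tgt _ _)

end CategoryTheory.ShortComplex.ShortExact

lemma ModuleCat.shortExact_inl_snd {A : Type u} [CommRing A] (M N : Type u) [AddCommGroup M]
    [Module A M] [AddCommGroup N] [Module A N] :
    (ModuleCat.shortComplexOfCompEqZero (LinearMap.inl A M N) (LinearMap.snd A M N)
      (LinearMap.snd_comp_inl A M N)).ShortExact :=
  ModuleCat.shortComplex_shortExact _ Function.Exact.inl_snd LinearMap.inl_injective
    LinearMap.snd_surjective

namespace fiberProduct

variable {A B C C' : Type} [CommRing A] [CommRing B] [CommRing C] [CommRing C']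
    [Algebra A B] [Algebra A C] [Algebra A C'] (f : C →ₐ[A] B) (f' : C' →ₐ[A] B)

lemma exact_val_coprod_neg :
    Function.Exact (fiberProduct A B C C' f f').val.toLinearMap
      (f.toLinearMap.coprod (-f'.toLinearMap)) := by
  intro y
  constructor
  · intro h
    exact ⟨⟨y, add_neg_eq_zero.1 h⟩, rfl⟩
  · rintro ⟨x, rfl⟩
    exact add_neg_eq_zero.2 x.2

abbrev mayerVietoris : ShortComplex (ModuleCat A) :=
  ModuleCat.shortComplexOfCompEqZero (fiberProduct A B C C' f f').val.toLinearMap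
    (f.toLinearMap.coprod (-f'.toLinearMap)) (exact_val_coprod_neg f f').linearMap_comp_eq_zero

lemma mayerVietoris_shortExact (hf : Function.Surjective f) : (mayerVietoris f f').ShortExact := by
  refine ModuleCat.shortComplex_shortExact _ (exact_val_coprod_neg f f') Subtype.val_injective
    fun b => ?_
  obtain ⟨c, rfl⟩ := hf b
  exact ⟨(c, 0), by simp⟩

end fiberProduct

theorem tor_fiberProduct_vanishing_general
    (A Abar B C C' : Type) [CommRing A] [CommRing Abar] [CommRing B] [CommRing C] [CommRing C']
    [Algebra A Abar] [Algebra A B] [Algebra A C] [Algebra A C']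
    (n : ℕ)
    (f : C →ₐ[A] B) (f' : C' →ₐ[A] B)
    (hf : Function.Surjective f)
    (hC : ∀ q : ℕ, 0 < q → q ≤ n - 1 →
      IsZero (((Tor (ModuleCat A) q).obj (ModuleCat.of A C)).obj (ModuleCat.of A Abar)))
    (hC' : ∀ q : ℕ, 0 < q → q ≤ n - 1 →
      IsZero (((Tor (ModuleCat A) q).obj (ModuleCat.of A C')).obj (ModuleCat.of A Abar)))
    (hB : ∀ q : ℕ, 0 < q → q ≤ n →
      IsZero (((Tor (ModuleCat A) q).obj (ModuleCat.of A B)).obj (ModuleCat.of A Abar))) :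
    ∀ q : ℕ, 0 < q → q ≤ n - 1 →
      IsZero (((Tor (ModuleCat A) q).obj
        (ModuleCat.of A (fiberProduct A B C C' f f'))).obj (ModuleCat.of A Abar)) := by
  intro q hq hqn
  have hprod := (ModuleCat.shortExact_inl_snd C C').isZero_Tor_X₂ (.of A Abar) q
    (hC q hq hqn) (hC' q hq hqn)
  exact (fiberProduct.mayerVietoris_shortExact f f' hf).isZero_Tor_X₁ (.of A Abar) q
    (hB (q + 1) q.succ_pos (by omega)) hprod

theorem tor_fiberProduct_vanishing
    (A Abar B C C' : Type) [CommRing A] [CommRing Abar] [CommRing B] [CommRing C] [CommRing C']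
    [Algebra A Abar] [Algebra A B] [Algebra A C] [Algebra A C']
    (n : ℕ) (hn : 1 ≤ n)
    (f : C →ₐ[A] B) (f' : C' →ₐ[A] B)
    (hf : Function.Surjective f) (hf' : Function.Surjective f')
    (hC : ∀ q : ℕ, 0 < q → q ≤ n - 1 →
      IsZero (((Tor (ModuleCat A) q).obj (ModuleCat.of A C)).obj (ModuleCat.of A Abar)))
    (hC' : ∀ q : ℕ, 0 < q → q ≤ n - 1 →
      IsZero (((Tor (ModuleCat A) q).obj (ModuleCat.of A C')).obj (ModuleCat.of A Abar)))
    (hB : ∀ q : ℕ, 0 < q → q ≤ n →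
      IsZero (((Tor (ModuleCat A) q).obj (ModuleCat.of A B)).obj (ModuleCat.of A Abar))) :
    ∀ q : ℕ, 0 < q → q ≤ n - 1 →
      IsZero (((Tor (ModuleCat A) q).obj
        (ModuleCat.of A (fiberProduct A B C C' f f'))).obj (ModuleCat.of A Abar)) :=
  tor_fiberProduct_vanishing_general A Abar B C C' n f f' hf hC hC' hB
end

section
/- Let A be a commutative ring, σ a type, and P = A[σ] the polynomial A-algebra on variables indexed by σ (i.e., MvPolynomial σ A). Let p : P' → P be a surjective A-algebra homomorphism whose kernel J satisfies J² = 0 (so J is a P-module). Then the sequence of P-modules 0 → J → Ω_{P'/A} ⊗_{P'} P → Ω_{P/A} → 0, where the first map sends j ∈ J to d(j) ⊗ 1 and the second is induced by the canonical map Ω_{P'/A} → Ω_{P/A}, is exact; in particular the map J → Ω_{P'/A} ⊗_{P'} P is injective. -/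
/-!
STATEMENT 8: Let `P = A[σ]` be a polynomial `A`-algebra and `p : P' → P` a surjective
`A`-algebra homomorphism with square-zero kernel `J`. Then the sequence of `P`-modules
`0 → J → Ω_{P'/A} ⊗_{P'} P → Ω_{P/A} → 0` (first map `j ↦ d j ⊗ 1`, second map induced by
`Ω_{P'/A} → Ω_{P/A}`) is exact; in particular `J → Ω_{P'/A} ⊗_{P'} P` is injective.

Here the surjection `p` is encoded as the algebra-structure map
`algebraMap P' (MvPolynomial σ A)` of an `A`-algebra structure of `MvPolynomial σ A`
over `P'`.
-/

theorem conormal_sequence_of_polynomial_exact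
    (A : Type) [CommRing A] (σ : Type)
    (P' : Type) [CommRing P'] [Algebra A P']
    [Algebra P' (MvPolynomial σ A)] [IsScalarTower A P' (MvPolynomial σ A)]
    (hp : Function.Surjective (algebraMap P' (MvPolynomial σ A)))
    (hsq : (RingHom.ker (algebraMap P' (MvPolynomial σ A))) ^ 2 = ⊥) :
    Function.Injective (KaehlerDifferential.kerToTensor A P' (MvPolynomial σ A)) ∧
    Function.Exact (KaehlerDifferential.kerToTensor A P' (MvPolynomial σ A))
      (KaehlerDifferential.mapBaseChange A P' (MvPolynomial σ A)) ∧
    Function.Surjective (KaehlerDifferential.mapBaseChange A P' (MvPolynomial σ A)) := by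
  set S := MvPolynomial σ A
  -- A section of the surjection `P' → S`, obtained from formal smoothness of `S = A[σ]`.
  have hnil : IsNilpotent (RingHom.ker ((IsScalarTower.toAlgHom A P' S : P' →ₐ[A] S) :
      P' →+* S)) := ⟨2, hsq⟩
  let g : S →ₐ[A] P' :=
    Algebra.FormallySmooth.liftOfSurjective (AlgHom.id A S)
      (IsScalarTower.toAlgHom A P' S) hp hnil
  have hg : (IsScalarTower.toAlgHom A P' S).comp g = AlgHom.id A S :=
    Algebra.FormallySmooth.comp_liftOfSurjective (AlgHom.id A S)
      (IsScalarTower.toAlgHom A P' S) hp hnil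
  refine ⟨?_, ?_, KaehlerDifferential.mapBaseChange_surjective A P' S hp⟩
  · -- injectivity, via the retraction coming from the section `g`
    have h := retractionOfSectionOfKerSqZero_comp_kerToTensor g hsq hg
    intro x y hxy
    have hx := LinearMap.congr_fun h x
    have hy := LinearMap.congr_fun h y
    simp only [LinearMap.comp_apply, LinearMap.id_apply] at hx hy
    rw [← hx, ← hy, hxy]
  · -- exactness, deduced from the exactness of `I/I² → S ⊗ Ω → Ω`
    have h := KaehlerDifferential.exact_kerCotangentToTensor_mapBaseChange A P' S hp
    intro y
    rw [h y]
    constructor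
    · rintro ⟨x, rfl⟩
      obtain ⟨x, rfl⟩ := Ideal.toCotangent_surjective _ x
      exact ⟨x, rfl⟩
    · rintro ⟨x, rfl⟩
      exact ⟨Ideal.toCotangent _ x, rfl⟩
end

section
/- Let A be a commutative ring, B a commutative A-algebra, and J a B-module. Let B + J denote the trivial square-zero extension of B by J (the ring B ⊕ J with multiplication (b, j)(b', j') = (bb', bj' + b'j)), an A-algebra with projection fst : B + J → B. Then the map sending an A-derivation d : B → J to the map φ_d : B + J → B + J, φ_d(b, j) = (b, j + d(b)), is a group isomorphism from the additive group Der_A(B, J) to the group (under composition) of A-algebra automorphisms φ of B + J satisfying fst ∘ φ = fst and φ(0, j) = (0, j) for all j ∈ J. -/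
/-!
STATEMENT 9: For an `A`-algebra `B` and a `B`-module `J`, the map `d ↦ φ_d`, where
`φ_d (b, j) = (b, j + d b)`, is a group isomorphism from the additive group `Der_A(B, J)`
to the group of `A`-algebra automorphisms `φ` of the trivial square-zero extension `B + J`
satisfying `fst ∘ φ = fst` and `φ (0, j) = (0, j)`.
-/

/-- The group of `A`-algebra automorphisms of the trivial square-zero extension `B + J`
that commute with the projection to `B` and restrict to the identity on `J`. -/
def trivSqZeroExtAut (A B J : Type) [CommRing A] [CommRing B] [Algebra A B]
    [AddCommGroup J] [Module B J] [Module Bᵐᵒᵖ J] [IsCentralScalar B J]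
    [Module A J] [IsScalarTower A B J] [IsScalarTower A Bᵐᵒᵖ J] :
    Subgroup (TrivSqZeroExt B J ≃ₐ[A] TrivSqZeroExt B J) where
  carrier := {φ | (∀ x : TrivSqZeroExt B J, (φ x).fst = x.fst) ∧
    ∀ j : J, φ (TrivSqZeroExt.inr j) = TrivSqZeroExt.inr j}
  one_mem' := ⟨fun _ => rfl, fun _ => rfl⟩
  mul_mem' := by
    intro φ ψ hφ hψ
    refine ⟨fun x => ?_, fun j => ?_⟩
    · exact (hφ.1 (ψ x)).trans (hψ.1 x)
    · exact (congrArg φ (hψ.2 j)).trans (hφ.2 j)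
  inv_mem' := by
    intro φ hφ
    have hinv : φ⁻¹ = φ.symm := rfl
    rw [hinv]
    refine ⟨fun x => ?_, fun j => ?_⟩
    · conv_rhs => rw [show x = φ (φ.symm x) from (φ.apply_symm_apply x).symm]
      exact (hφ.1 (φ.symm x)).symm
    · apply φ.injective
      rw [φ.apply_symm_apply, hφ.2 j]


section Aux

variable {A B J : Type} [CommRing A] [CommRing B] [Algebra A B]
    [AddCommGroup J] [Module B J] [Module Bᵐᵒᵖ J] [IsCentralScalar B J]
    [Module A J] [IsScalarTower A B J] [IsScalarTower A Bᵐᵒᵖ J]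

open TrivSqZeroExt

def derPhi (d : Derivation A B J) : TrivSqZeroExt B J ≃ₐ[A] TrivSqZeroExt B J where
  toFun x := x + inr (d x.fst)
  invFun x := x + inr (-(d x.fst))
  left_inv x := by ext <;> simp
  right_inv x := by ext <;> simp
  map_add' x y := by ext <;> simp <;> abel
  map_mul' x y := by
    ext
    · simp
    · simp [smul_comm, op_smul_eq_smul]
      abel
  commutes' a := by
    ext <;> simp [algebraMap_eq_inl']

def autDer (φ : TrivSqZeroExt B J ≃ₐ[A] TrivSqZeroExt B J)
    (hφ : φ ∈ trivSqZeroExtAut A B J) : Derivation A B J where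
  toFun b := (φ (inl b)).snd
  map_add' x y := by simp [inl_add]
  map_smul' a b := by
    show (φ (inl (a • b))).snd = a • (φ (inl b)).snd
    rw [inl_smul, map_smul, snd_smul]
  map_one_eq_zero' := by simp
  leibniz' x y := by
    have h := congrArg TrivSqZeroExt.snd (map_mul φ (inl x) (inl y))
    simp only [← inl_mul, snd_mul, hφ.1, fst_inl, op_smul_eq_smul] at h
    simpa [add_comm] using h

lemma derPhi_mem (d : Derivation A B J) : derPhi d ∈ trivSqZeroExtAut A B J :=
  ⟨fun x => by simp [derPhi], fun j => by simp [derPhi]⟩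

end Aux

theorem derivation_mulEquiv_trivSqZeroExtAut
    (A B J : Type) [CommRing A] [CommRing B] [Algebra A B]
    [AddCommGroup J] [Module B J] [Module Bᵐᵒᵖ J] [IsCentralScalar B J]
    [Module A J] [IsScalarTower A B J] [IsScalarTower A Bᵐᵒᵖ J] :
    ∃ e : Multiplicative (Derivation A B J) ≃* trivSqZeroExtAut A B J,
      ∀ (d : Derivation A B J) (x : TrivSqZeroExt B J),
        ((e (Multiplicative.ofAdd d) : TrivSqZeroExt B J ≃ₐ[A] TrivSqZeroExt B J)) x
          = x + TrivSqZeroExt.inr (d x.fst) := by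
  refine ⟨MulEquiv.mk (Equiv.mk (fun d => ⟨derPhi d.toAdd, derPhi_mem _⟩)
      (fun φ => Multiplicative.ofAdd (autDer φ.1 φ.2)) ?_ ?_) ?_, fun d x => rfl⟩
  · intro d
    apply Multiplicative.toAdd.injective
    ext b
    simp [derPhi, autDer]
  · rintro ⟨φ, hφ⟩
    refine Subtype.ext (AlgEquiv.ext fun x => ?_)
    show (derPhi (autDer φ hφ)) x = φ x
    have hx : x = TrivSqZeroExt.inl x.fst + TrivSqZeroExt.inr x.snd := by ext <;> simp
    conv_rhs => rw [hx]
    rw [map_add, hφ.2]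
    have : φ (TrivSqZeroExt.inl x.fst) =
        TrivSqZeroExt.inl x.fst + TrivSqZeroExt.inr ((φ (TrivSqZeroExt.inl x.fst)).snd) := by
      ext
      · simpa using hφ.1 (TrivSqZeroExt.inl x.fst)
      · simp
    rw [this]
    show x + TrivSqZeroExt.inr _ = _
    ext <;> simp <;> abel
  · intro d₁ d₂
    refine Subtype.ext (AlgEquiv.ext fun x => ?_)
    show (derPhi (d₁.toAdd + d₂.toAdd)) x = (derPhi d₁.toAdd) ((derPhi d₂.toAdd) x)
    simp [derPhi]
    ext <;> simp <;> abel
end
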